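/- arXiv:1408.4877 — 7 statements merged into one kernel-verified Lean document; each statement's English description precedes it below -/
import Mathlib

section
/- Let m : [0,∞) → (0,∞) be continuous and suppose that t ↦ m(t)/t is nonincreasing on (0,∞). Let M(t) = ∫₀ᵗ m(s) ds. Then for every θ ≥ 2n (with n ≥ 1 an integer), the function t ↦ (1/n)M(t) − (1/θ) m(t) t is nondecreasing on [0,∞); in particular (1/n)M(t) − (1/θ) m(t) t ≥ 0 for all t ≥ 0. -/
theorem stmt0 (m : ℝ → ℝ) (n : ℕ) (θ : ℝ)
    (hn : 1 ≤ n)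
    (hm_cont : ContinuousOn m (Set.Ici 0))
    (hm_pos : ∀ t ≥ (0:ℝ), 0 < m t)
    (hm_mono : ∀ s t : ℝ, 0 < s → s ≤ t → m t / t ≤ m s / s)
    (M : ℝ → ℝ) (hM : ∀ t, M t = ∫ s in (0:ℝ)..t, m s)
    (hθ : 2 * (n:ℝ) ≤ θ) :
    MonotoneOn (fun t => (1 / (n:ℝ)) * M t - (1 / θ) * m t * t) (Set.Ici 0) ∧
      ∀ t ≥ (0:ℝ), 0 ≤ (1 / (n:ℝ)) * M t - (1 / θ) * m t * t := by
  have hn1 : (1:ℝ) ≤ (n:ℝ) := by exact_mod_cast hn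
  have hnpos : (0:ℝ) < (n:ℝ) := by linarith
  have hθpos : (0:ℝ) < θ := by linarith
  have hM0 : M 0 = 0 := by rw [hM]; simp
  have hintegrable : ∀ a b : ℝ, 0 ≤ a → a ≤ b →
      IntervalIntegrable m MeasureTheory.volume a b := by
    intro a b ha hab
    apply ContinuousOn.intervalIntegrable
    apply hm_cont.mono
    rw [Set.uIcc_of_le hab]
    intro x hx
    exact le_trans ha hx.1
  have key : ∀ s t : ℝ, 0 ≤ s → s ≤ t →
      (1 / (n:ℝ)) * M s - (1 / θ) * m s * s ≤ (1 / (n:ℝ)) * M t - (1 / θ) * m t * t := by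
    intro s t hs hst
    rcases eq_or_lt_of_le hst with rfl | hlt
    · exact le_rfl
    have ht : 0 < t := lt_of_le_of_lt hs hlt
    set c := m t / t with hc_def
    have hc : 0 < c := div_pos (hm_pos t ht.le) ht
    have hMdiff : M t - M s = ∫ u in s..t, m u := by
      have := intervalIntegral.integral_add_adjacent_intervals
        (hintegrable 0 s le_rfl hs) (hintegrable s t hs hst)
      rw [hM, hM]
      linarith
    have hlow : c * (t^2 - s^2) / 2 ≤ ∫ u in s..t, m u := by
      have hmono : ∀ u ∈ Set.Icc s t, c * u ≤ m u := by
        intro u hu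
        rcases eq_or_lt_of_le (le_trans hs hu.1) with h0 | h0
        · rw [← h0]
          simpa using (hm_pos 0 le_rfl).le
        · exact (le_div_iff₀ h0).mp (hm_mono u t h0 hu.2)
      calc c * (t^2 - s^2) / 2 = ∫ u in s..t, c * u := by
            rw [intervalIntegral.integral_const_mul, integral_id]; ring
        _ ≤ ∫ u in s..t, m u :=
            intervalIntegral.integral_mono_on hst
              ((continuous_const.mul continuous_id).intervalIntegrable s t)
              (hintegrable s t hs hst) hmono
    have h1 : m t * t = c * t^2 := by
      rw [hc_def]; field_simp
    have h2 : c * s^2 ≤ m s * s := by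
      rcases eq_or_lt_of_le hs with rfl | hs'
      · simp
      · have h := hm_mono s t hs' hst
        rw [div_le_div_iff₀ ht hs'] at h
        rw [hc_def, div_mul_eq_mul_div, div_le_iff₀ ht]
        nlinarith
    have hθn : 1 / θ ≤ 1 / (2 * (n:ℝ)) :=
      one_div_le_one_div_of_le (by positivity) hθ
    have hs2 : s^2 ≤ t^2 := by nlinarith
    have key1 : (1/θ) * (m t * t - m s * s) ≤ (1/θ) * (c * (t^2 - s^2)) := by
      apply mul_le_mul_of_nonneg_left _ (by positivity)
      linarith
    have key2 : (1/θ) * (c * (t^2 - s^2)) ≤ (1/(2*(n:ℝ))) * (c * (t^2 - s^2)) := by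
      apply mul_le_mul_of_nonneg_right hθn
      nlinarith
    have key3 : (1/(2*(n:ℝ))) * (c * (t^2 - s^2)) ≤ (1/(n:ℝ)) * ∫ u in s..t, m u := by
      have h := mul_le_mul_of_nonneg_left hlow (show (0:ℝ) ≤ 1/(n:ℝ) by positivity)
      calc (1/(2*(n:ℝ))) * (c * (t^2 - s^2)) = 1/(n:ℝ) * (c * (t^2 - s^2)/2) := by ring
        _ ≤ _ := h
    rw [← hMdiff] at key3
    simp only [one_div] at key1 key2 key3 ⊢
    linarith [key1, key2, key3]
  constructor
  · intro a ha b hb hab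
    exact key a b ha hab
  · intro t ht
    have h := key 0 t le_rfl ht
    simp [hM0] at h
    simp only [one_div]
    linarith [h]
end

section
/- Let f : Ω × [0,∞) → [0,∞) be continuous and F(x,t) = ∫₀ᵗ f(x,s) ds. Suppose there exist t₀ > 0, K₀ > 0 with F(x,t) ≤ K₀ f(x,t) for all t ≥ t₀ and all x, and inf_x F(x,t₀) > 0. Then for each θ > 0 there exists R_θ > 0 such that θ F(x,t) ≤ t f(x,t) for all x ∈ Ω and t ≥ R_θ. -/
theorem stmt2 {Ω : Type*} (f F : Ω → ℝ → ℝ)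
    (t₀ K₀ c : ℝ) (ht₀ : 0 < t₀) (hK₀ : 0 < K₀) (hc : 0 < c)
    (hf_cont : ∀ x, Continuous (f x))
    (hf_nonneg : ∀ x, ∀ t ≥ (0:ℝ), 0 ≤ f x t)
    (hF : ∀ x t, F x t = ∫ s in (0:ℝ)..t, f x s)
    (hFf : ∀ x, ∀ t ≥ t₀, F x t ≤ K₀ * f x t)
    (hFinf : ∀ x, c ≤ F x t₀) :
    ∀ θ > (0:ℝ), ∃ R > (0:ℝ), ∀ x, ∀ t ≥ R, θ * F x t ≤ t * f x t := by
  intro θ hθ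
  refine ⟨max t₀ (θ * K₀), lt_of_lt_of_le ht₀ (le_max_left _ _), ?_⟩
  intro x t ht
  have ht₀' : t₀ ≤ t := le_trans (le_max_left _ _) ht
  have htK : θ * K₀ ≤ t := le_trans (le_max_right _ _) ht
  have hfnn : 0 ≤ f x t := hf_nonneg x t (le_trans ht₀.le ht₀')
  calc θ * F x t ≤ θ * (K₀ * f x t) := by
        exact mul_le_mul_of_nonneg_left (hFf x t ht₀') hθ.le
    _ = (θ * K₀) * f x t := by ring
    _ ≤ t * f x t := mul_le_mul_of_nonneg_right htK hfnn
end

section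
/- Let f : [0,∞) → [0,∞) be continuous with f(0) = 0, and suppose that t ↦ f(t)/t^{2n−1} is (strictly) increasing on (0,∞), where n ≥ 1. Let F(t) = ∫₀ᵗ f(s) ds. Then the function t ↦ t f(t) − 2n F(t) is increasing on [0,∞); in particular t f(t) − 2n F(t) ≥ 0 for all t ≥ 0. -/
/-!
Fix `0 ≤ a < b` and put `C = f b / b ^ m`. Monotonicity of `f t / t ^ m` gives `f ≤ C t ^ m`
on `(a, b]`, strictly inside, so `(m + 1) ∫_a^b f < C (b ^ (m + 1) - a ^ (m + 1))`;
moreover `a f a ≤ C a ^ (m + 1)` and `b f b = C b ^ (m + 1)`. Subtracting gives the strict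
increase of `t f t - (m + 1) ∫_0^t f`, and here `m + 1 = 2n`.
-/

open Set

section

variable {f : ℝ → ℝ} {m : ℕ} (hmono : StrictMonoOn (fun t => f t / t ^ m) (Ioi 0))
include hmono

lemma lt_div_pow_mul_pow_of_strictMonoOn {x b : ℝ} (hx : 0 < x) (hxb : x < b) :
    f x < f b / b ^ m * x ^ m :=
  (div_lt_iff₀ (pow_pos hx m)).mp (hmono hx (hx.trans hxb) hxb)

lemma le_div_pow_mul_pow_of_strictMonoOn {x b : ℝ} (hx : 0 < x) (hxb : x ≤ b) :
    f x ≤ f b / b ^ m * x ^ m := by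
  rcases hxb.lt_or_eq with hxb | rfl
  · exact (lt_div_pow_mul_pow_of_strictMonoOn hmono hx hxb).le
  · rw [div_mul_cancel₀ _ (pow_pos hx m).ne']

lemma mul_le_div_pow_mul_pow_succ_of_strictMonoOn {x b : ℝ} (hx : 0 ≤ x) (hxb : x ≤ b) :
    x * f x ≤ f b / b ^ m * x ^ (m + 1) := by
  rcases hx.lt_or_eq with hx | rfl
  · calc x * f x ≤ x * (f b / b ^ m * x ^ m) :=
          mul_le_mul_of_nonneg_left (le_div_pow_mul_pow_of_strictMonoOn hmono hx hxb) hx.le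
      _ = f b / b ^ m * x ^ (m + 1) := by ring
  · simp

lemma mul_integral_lt_of_strictMonoOn (hf : Continuous f) {a b : ℝ} (ha : 0 ≤ a)
    (hab : a < b) :
    (m + 1) * ∫ s in a..b, f s < f b / b ^ m * (b ^ (m + 1) - a ^ (m + 1)) := by
  have hmid : 0 < (a + b) / 2 := by linarith
  have hlt : ∫ s in a..b, f s < ∫ s in a..b, f b / b ^ m * s ^ m := by
    refine intervalIntegral.integral_lt_integral_of_continuousOn_of_le_of_exists_lt hab
      hf.continuousOn (by fun_prop)
      (fun x hx => le_div_pow_mul_pow_of_strictMonoOn hmono (ha.trans_lt hx.1) hx.2)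
      ⟨(a + b) / 2, ⟨by linarith, by linarith⟩, ?_⟩
    exact lt_div_pow_mul_pow_of_strictMonoOn hmono hmid (by linarith)
  rw [intervalIntegral.integral_const_mul, integral_pow] at hlt
  calc (m + 1) * ∫ s in a..b, f s
      < (m + 1) * (f b / b ^ m * ((b ^ (m + 1) - a ^ (m + 1)) / (m + 1))) := by gcongr
    _ = f b / b ^ m * (b ^ (m + 1) - a ^ (m + 1)) := by field_simp

theorem strictMonoOn_mul_sub_mul_integral (hf : Continuous f) :
    StrictMonoOn (fun t => t * f t - (m + 1) * ∫ s in (0:ℝ)..t, f s) (Ici 0) := by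
  intro a (ha : 0 ≤ a) b _ hab
  have hb0 : 0 < b := ha.trans_lt hab
  have hfb : b * f b = f b / b ^ m * b ^ (m + 1) := by
    field_simp
    ring
  have hint := mul_integral_lt_of_strictMonoOn hmono hf ha hab
  have hfa := mul_le_div_pow_mul_pow_succ_of_strictMonoOn hmono ha hab.le
  rw [← intervalIntegral.integral_interval_sub_left (hf.intervalIntegrable 0 b)
    (hf.intervalIntegrable 0 a)] at hint
  simp only
  linarith

end

theorem stmt3_general (n : ℕ) (hn : 1 ≤ n) (f : ℝ → ℝ)
    (hf_cont : Continuous f)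
    (hmono : StrictMonoOn (fun t => f t / t ^ (2 * n - 1)) (Set.Ioi 0))
    (F : ℝ → ℝ) (hF : ∀ t, F t = ∫ s in (0:ℝ)..t, f s) :
    StrictMonoOn (fun t => t * f t - 2 * n * F t) (Set.Ici 0) ∧
      ∀ t ≥ (0:ℝ), 0 ≤ t * f t - 2 * n * F t := by
  have hexp : ((2 * n - 1 : ℕ) : ℝ) + 1 = 2 * n := by
    rw [Nat.cast_sub (by omega)]
    push_cast
    ring
  have hSM : StrictMonoOn (fun t => t * f t - 2 * n * F t) (Ici 0) := by
    simpa only [← hexp, hF] using strictMonoOn_mul_sub_mul_integral hmono hf_cont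
  refine ⟨hSM, fun t ht => ?_⟩
  simpa [hF] using hSM.monotoneOn self_mem_Ici ht ht

theorem stmt3 (n : ℕ) (hn : 1 ≤ n) (f : ℝ → ℝ)
    (hf_cont : Continuous f) (hf0 : f 0 = 0)
    (hf_nonneg : ∀ t ≥ (0:ℝ), 0 ≤ f t)
    (hmono : StrictMonoOn (fun t => f t / t ^ (2 * n - 1)) (Set.Ioi 0))
    (F : ℝ → ℝ) (hF : ∀ t, F t = ∫ s in (0:ℝ)..t, f s) :
    StrictMonoOn (fun t => t * f t - 2 * n * F t) (Set.Ici 0) ∧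
      ∀ t ≥ (0:ℝ), 0 ≤ t * f t - 2 * n * F t :=
  stmt3_general n hn f hf_cont hmono F hF
end

section
/- For all vectors a, b ∈ ℝⁿ and every real l ≥ 2, the inequality |a − b|ˡ ≤ 2^{l−2} (|a|^{l−2} a − |b|^{l−2} b) · (a − b) holds, where · denotes the Euclidean inner product and |·| the Euclidean norm. -/
/-!
Put `p = l - 2`, `x = ‖a‖`, `y = ‖b‖`, `d = ‖a - b‖`. Expanding the inner product, the right-hand
side is `2 ^ p * ((x ^ p - y ^ p) * (x ^ 2 - y ^ 2) + (x ^ p + y ^ p) * d ^ 2) / 2`, while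
`d ^ l ≤ (x + y) ^ p * d ^ 2` since `d ≤ x + y`. Both bounds are affine in `d ^ 2 ∈ [0, (x + y) ^ 2]`,
so it suffices to compare them at the endpoints: at `d = 0` because `x ^ p - y ^ p` and `x ^ 2 - y ^ 2`
have the same sign, at `d = x + y` by the power mean inequality
`(x + y) ^ (p + 1) ≤ 2 ^ p * (x ^ (p + 1) + y ^ (p + 1))`.
-/

open Real

lemma Real.rpow_add_le_mul_rpow_add_rpow {x y q : ℝ} (hx : 0 ≤ x) (hy : 0 ≤ y) (hq : 1 ≤ q) :
    (x + y) ^ q ≤ 2 ^ (q - 1) * (x ^ q + y ^ q) := by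
  lift x to NNReal using hx
  lift y to NNReal using hy
  exact_mod_cast NNReal.rpow_add_le_mul_rpow_add_rpow x y hq

lemma real_inner_smul_sub_smul_sub {E : Type*} [NormedAddCommGroup E] [InnerProductSpace ℝ E]
    (s t : ℝ) (a b : E) :
    inner ℝ (s • a - t • b) (a - b) =
      ((s - t) * (‖a‖ ^ 2 - ‖b‖ ^ 2) + (s + t) * ‖a - b‖ ^ 2) / 2 := by
  simp only [inner_sub_left, inner_sub_right, real_inner_smul_left, real_inner_self_eq_norm_sq,
    real_inner_comm a b]
  linear_combination (-(s + t) / 2) * norm_sub_sq_real a b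

lemma rpow_add_two_le_of_le_add {x y d p : ℝ} (hx : 0 ≤ x) (hy : 0 ≤ y) (hd : 0 ≤ d)
    (hdxy : d ≤ x + y) (hp : 0 ≤ p) :
    d ^ (p + 2) ≤ 2 ^ p * (((x ^ p - y ^ p) * (x ^ 2 - y ^ 2) + (x ^ p + y ^ p) * d ^ 2) / 2) := by
  have hxy : 0 ≤ x + y := add_nonneg hx hy
  have hd_pow : d ^ (p + 2) ≤ (x + y) ^ p * d ^ 2 := by
    rw [rpow_add' hd (by linarith), rpow_two]
    gcongr
  -- at `d = x + y` the bracket factors as `(x + y) (x ^ (p + 1) + y ^ (p + 1))`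
  have hend : (x + y) ^ p * (x + y) ^ 2 ≤
      2 ^ p * (((x ^ p - y ^ p) * (x ^ 2 - y ^ 2) + (x ^ p + y ^ p) * (x + y) ^ 2) / 2) := by
    have hmean := rpow_add_le_mul_rpow_add_rpow hx hy (by linarith : 1 ≤ p + 1)
    rw [add_sub_cancel_right, rpow_add_one' hx (by linarith), rpow_add_one' hy (by linarith),
      rpow_add_one' hxy (by linarith)] at hmean
    calc (x + y) ^ p * (x + y) ^ 2 = (x + y) * ((x + y) ^ p * (x + y)) := by ring
      _ ≤ (x + y) * (2 ^ p * (x ^ p * x + y ^ p * y)) := by gcongr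
      _ = _ := by ring
  have hd2 : d ^ 2 ≤ (x + y) ^ 2 := by gcongr
  have hmono : 0 ≤ 2 ^ p * ((x ^ p - y ^ p) * (x ^ 2 - y ^ 2)) :=
    mul_nonneg (by positivity) <| ((monotoneOn_rpow_Ici_of_exponent_nonneg hp).monovaryOn
      pow_left_monotoneOn).sub_mul_sub_nonneg hy hx
  rcases le_total ((x + y) ^ p) (2 ^ p * (x ^ p + y ^ p) / 2) with hk | hk
  · linarith [mul_le_mul_of_nonneg_right hk (sq_nonneg d)]
  · linarith [mul_le_mul_of_nonneg_left hd2 (sub_nonneg.2 hk)]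

theorem stmt4 (n : ℕ) (a b : EuclideanSpace ℝ (Fin n)) (l : ℝ) (hl : 2 ≤ l) :
    ‖a - b‖ ^ l ≤ 2 ^ (l - 2) *
      (inner ℝ ((‖a‖ ^ (l - 2) : ℝ) • a - (‖b‖ ^ (l - 2) : ℝ) • b) (a - b) : ℝ) := by
  rw [real_inner_smul_sub_smul_sub]
  calc ‖a - b‖ ^ l = ‖a - b‖ ^ (l - 2 + 2) := by rw [sub_add_cancel]
    _ ≤ _ := rpow_add_two_le_of_le_add (norm_nonneg a) (norm_nonneg b) (norm_nonneg _)
      (norm_sub_le a b) (by linarith)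
end

section
/- Let G(s) = ∫₀ˢ g(τ) dτ where g(s) = s|s|^p e^{|s|^β}, with p+2 > 2n > 0 and β > 0. Then for all s ∈ ℝ: (1/(2n)) g(s) s − G(s) ≥ (1/(2n) − 1/(p+2)) |s|^{p+2+β}. -/
theorem stmt9 (n : ℕ) (p β : ℝ) (hn : 1 ≤ n) (hp : 2 * (n:ℝ) < p + 2) (hβ : 0 < β)
    (g G : ℝ → ℝ)
    (hg : ∀ s, g s = s * |s| ^ p * Real.exp (|s| ^ β))
    (hG : ∀ s, G s = ∫ τ in (0:ℝ)..s, g τ) :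
    ∀ s : ℝ, (1 / (2 * (n:ℝ)) - 1 / (p + 2)) * |s| ^ (p + 2 + β)
      ≤ 1 / (2 * (n:ℝ)) * g s * s - G s := by
  have hn1 : (1:ℝ) ≤ (n:ℝ) := by exact_mod_cast hn
  have hnp : (0:ℝ) < 2 * n := by linarith
  have hp0 : (0:ℝ) < p := by linarith
  have hP : (0:ℝ) < p + 2 := by linarith
  have hgodd : ∀ x, g (-x) = - g x := by
    intro x; rw [hg, hg]; simp [abs_neg]
  have hgc : Continuous g := by
    have : Continuous fun s : ℝ => s * |s| ^ p * Real.exp (|s| ^ β) := by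
      apply Continuous.mul
      apply Continuous.mul continuous_id
      · exact (continuous_abs.rpow_const (fun x => Or.inr hp0.le))
      · exact Real.continuous_exp.comp (continuous_abs.rpow_const (fun x => Or.inr hβ.le))
    exact (funext hg ▸ this : Continuous g)
  have hGodd : ∀ s, G (-s) = G s := by
    intro s
    have h1 : (∫ x in (0:ℝ)..s, g (-x)) = ∫ x in (-s)..(0:ℝ), g x := by
      simpa using intervalIntegral.integral_comp_neg g (a := 0) (b := s)
    simp only [hgodd, intervalIntegral.integral_neg, neg_inj] at h1
    rw [intervalIntegral.integral_symm 0 (-s)] at h1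
    rw [hG, hG]
    linarith [h1]
  have hGder : ∀ s, HasDerivAt G (g s) s := by
    intro s
    have : HasDerivAt (fun u => ∫ x in (0:ℝ)..u, g x) (g s) s :=
      intervalIntegral.integral_hasDerivAt_right (hgc.intervalIntegrable 0 s)
        (hgc.stronglyMeasurableAtFilter _ _) hgc.continuousAt
    exact (funext hG ▸ this : HasDerivAt G (g s) s)
  have main : ∀ s : ℝ, 0 ≤ s → (1 / (2 * (n:ℝ)) - 1 / (p + 2)) * s ^ (p + 2 + β)
      ≤ 1 / (2 * (n:ℝ)) * (s ^ (p+2) * Real.exp (s ^ β)) - G s := by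
    set c := 1 / (2 * (n:ℝ)) - 1 / (p + 2) with hc
    set F : ℝ → ℝ := fun s => 1 / (2 * (n:ℝ)) * (s ^ (p+2) * Real.exp (s ^ β))
      - c * s ^ (p + 2 + β) - G s with hF
    have hFder : ∀ s : ℝ, 0 < s → HasDerivAt F
        (1 / (2 * (n:ℝ)) * ((p+2) * s ^ (p+1) * Real.exp (s^β)
            + s ^ (p+2) * (Real.exp (s^β) * (β * s ^ (β-1))))
          - c * ((p+2+β) * s ^ (p+2+β-1)) - g s) s := by
      intro s hs
      have h1 : HasDerivAt (fun x : ℝ => x ^ (p+2)) ((p+2) * s ^ (p+2-1)) s :=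
        Real.hasDerivAt_rpow_const (Or.inl hs.ne')
      have hexp : p + 2 - 1 = p + 1 := by ring
      rw [hexp] at h1
      have h2 : HasDerivAt (fun x : ℝ => x ^ β) (β * s ^ (β-1)) s :=
        Real.hasDerivAt_rpow_const (Or.inl hs.ne')
      have h3 : HasDerivAt (fun x : ℝ => Real.exp (x ^ β))
          (Real.exp (s^β) * (β * s ^ (β-1))) s := h2.exp
      have h4 : HasDerivAt (fun x : ℝ => x ^ (p+2+β)) ((p+2+β) * s ^ (p+2+β-1)) s :=
        Real.hasDerivAt_rpow_const (Or.inl hs.ne')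
      exact (((h1.mul h3).const_mul (1 / (2*(n:ℝ)))).sub (h4.const_mul c)).sub (hGder s)
    have hFcont : Continuous F := by
      have hGc : Continuous G := continuous_iff_continuousAt.2 fun x => (hGder x).continuousAt
      apply Continuous.sub _ hGc
      apply Continuous.sub
      · exact continuous_const.mul ((continuous_id.rpow_const (fun x => Or.inr (by linarith))).mul
          (Real.continuous_exp.comp (continuous_id.rpow_const (fun x => Or.inr hβ.le))))
      · exact continuous_const.mul (continuous_id.rpow_const (fun x => Or.inr (by positivity)))
    have hmono : MonotoneOn F (Set.Ici (0:ℝ)) := by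
      apply monotoneOn_of_deriv_nonneg (convex_Ici 0) hFcont.continuousOn
      · rw [interior_Ici]
        exact fun x hx => ((hFder x hx).differentiableAt).differentiableWithinAt
      · rw [interior_Ici]
        intro x hx
        have hx0 : (0:ℝ) < x := hx
        rw [(hFder x hx0).deriv]
        set E := Real.exp (x^β) with hE
        have hEge : 1 + x^β ≤ E := by
          have := Real.add_one_le_exp (x^β); linarith
        have ht : 0 ≤ x^β := Real.rpow_nonneg hx0.le β
        have hu : 0 ≤ x^(p+1) := Real.rpow_nonneg hx0.le _
        have e1 : x ^ (p+2+β-1) = x^(p+1) * x^β := by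
          rw [show p+2+β-1 = (p+1)+β by ring, Real.rpow_add hx0]
        have e4 : x ^ (β-1) = x^β / x := by
          rw [show β-1 = β + (-1) by ring, Real.rpow_add hx0, Real.rpow_neg_one]
          ring
        have e5 : x ^ (p+2) = x^(p+1) * x := by
          rw [show p+2 = (p+1)+1 by ring, Real.rpow_add_one hx0.ne']
        have e3 : g x = x^(p+1) * E := by
          rw [hg, abs_of_pos hx0, hE, show p+1 = p+1 from rfl,
            Real.rpow_add_one hx0.ne' p]
          ring
        have hD : 1 / (2 * (n:ℝ)) * ((p+2) * x ^ (p+1) * E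
              + x ^ (p+2) * (E * (β * x ^ (β-1))))
            - c * ((p+2+β) * x ^ (p+2+β-1)) - g x
            = x^(p+1) * (1 / (2*(n:ℝ)) * ((p+2) * E + E * β * x^β)
                - c * ((p+2+β) * x^β) - E) := by
          rw [e1, e4, e5, e3]
          field_simp
        rw [hD]
        apply mul_nonneg hu
        have poly : ((p+2) - 2*(n:ℝ)) * (p+2+β) * (x^β)
            ≤ ((p+2) - 2*(n:ℝ)) * (p+2) * E + (p+2) * β * (x^β) * E := by
          nlinarith [mul_nonneg (mul_nonneg (by linarith : (0:ℝ) ≤ (p+2) - 2*n) hP.le)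
              (by nlinarith : (0:ℝ) ≤ E - 1 - x^β),
            mul_nonneg (mul_nonneg (mul_nonneg hβ.le hP.le) ht)
              (by nlinarith : (0:ℝ) ≤ E - 1 - x^β),
            mul_nonneg (mul_nonneg (mul_nonneg hβ.le hP.le) ht) ht,
            mul_nonneg (mul_nonneg hβ.le hnp.le) ht]
        have hbr : 1 / (2*(n:ℝ)) * ((p+2) * E + E * β * x^β)
            - c * ((p+2+β) * x^β) - E
            = (((p+2) - 2*(n:ℝ)) * (p+2) * E + (p+2) * β * (x^β) * E
               - ((p+2) - 2*(n:ℝ)) * (p+2+β) * (x^β)) / ((2*(n:ℝ)) * (p+2)) := by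
          rw [hc]
          field_simp
          ring
        rw [hbr]
        apply div_nonneg (by linarith) (by positivity)
    intro s hs
    have hF0 : F 0 = 0 := by
      have hG0 : G 0 = 0 := by rw [hG]; simp
      simp only [hF, hG0]
      rw [Real.zero_rpow (by positivity : p + 2 ≠ 0),
        Real.zero_rpow (by positivity : p + 2 + β ≠ 0)]
      ring
    have := hmono (Set.self_mem_Ici) (Set.mem_Ici.2 hs) hs
    rw [hF0] at this
    simp only [hF] at this
    linarith
  intro s
  rcases le_or_gt 0 s with hs | hs
  · have h1 : g s * s = s ^ (p+2) * Real.exp (s ^ β) := by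
      rcases eq_or_lt_of_le hs with h0 | h0
      · rw [← h0, hg]
        simp [Real.zero_rpow (by positivity : p + 2 ≠ 0)]
      · rw [hg, abs_of_pos h0, show p+2 = (p+1)+1 by ring,
          Real.rpow_add_one h0.ne', Real.rpow_add_one h0.ne' p]
        ring
    rw [abs_of_nonneg hs]
    rw [mul_assoc, h1]
    exact main s hs
  · set t := -s with hts
    have ht : 0 ≤ t := by simp [hts]; linarith
    have habs : |s| = t := by rw [abs_of_neg hs]
    have h1 : g s * s = t ^ (p+2) * Real.exp (t ^ β) := by
      have : g s * s = g t * t := by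
        have : g s = - g t := by
          rw [show s = -t by simp [hts], hgodd]
        rw [this, hts]; ring
      rw [this]
      rcases eq_or_lt_of_le ht with h0 | h0
      · rw [← h0, hg]
        simp [Real.zero_rpow (by positivity : p + 2 ≠ 0)]
      · rw [hg, abs_of_pos h0, show p+2 = (p+1)+1 by ring,
          Real.rpow_add_one h0.ne', Real.rpow_add_one h0.ne' p]
        ring
    have hGst : G s = G t := by rw [show s = -t by simp [hts], hGodd]
    rw [habs, hGst]
    rw [mul_assoc, h1]
    exact main t ht
end

section
/- Let G be the primitive of g(s) = s|s|^p e^{|s|^β} with G(0)=0, where p > 0 and β > 0. Then G(s) ≤ (1/(p+2)) g(s) s for all s ∈ ℝ. -/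
open Real intervalIntegral

lemma gcont (p β : ℝ) (hp : 0 < p) (hβ : 0 < β) :
    Continuous (fun τ : ℝ => τ * |τ| ^ p * Real.exp (|τ| ^ β)) := by
  have h1 : Continuous (fun τ : ℝ => |τ| ^ p) :=
    continuous_abs.rpow_const (fun x => Or.inr hp.le)
  have h2 : Continuous (fun τ : ℝ => |τ| ^ β) :=
    continuous_abs.rpow_const (fun x => Or.inr hβ.le)
  exact (continuous_id.mul h1).mul (Real.continuous_exp.comp h2)

lemma key (p β : ℝ) (hp : 0 < p) (hβ : 0 < β) :
    ∀ s : ℝ, 0 ≤ s →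
      (∫ τ in (0:ℝ)..s, τ * |τ| ^ p * Real.exp (|τ| ^ β)) ≤
        1 / (p + 2) * s ^ (p + 2) * Real.exp (s ^ β) := by
  intro s hs
  have hcont := gcont p β hp hβ
  have hcont2 : Continuous (fun τ : ℝ => Real.exp (s ^ β) * τ ^ (p + 1)) := by
    have : Continuous (fun τ : ℝ => τ ^ (p + 1)) :=
      continuous_id.rpow_const (fun x => Or.inr (by linarith))
    exact continuous_const.mul this
  have hle : (∫ τ in (0:ℝ)..s, τ * |τ| ^ p * Real.exp (|τ| ^ β)) ≤
      ∫ τ in (0:ℝ)..s, Real.exp (s ^ β) * τ ^ (p + 1) := by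
    apply intervalIntegral.integral_mono_on hs
      (hcont.intervalIntegrable 0 s) (hcont2.intervalIntegrable 0 s)
    intro τ hτ
    obtain ⟨hτ0, hτs⟩ := hτ
    rw [abs_of_nonneg hτ0]
    rcases eq_or_lt_of_le hτ0 with h0 | h0
    · rw [← h0]
      simp [Real.zero_rpow hp.ne', Real.zero_rpow (by linarith : p + 1 ≠ 0)]
    · have h1 : τ * τ ^ p = τ ^ (p + 1) := by
        rw [Real.rpow_add_one h0.ne']; ring
      have hexp : Real.exp (τ ^ β) ≤ Real.exp (s ^ β) :=
        Real.exp_le_exp.2 (Real.rpow_le_rpow hτ0 hτs hβ.le)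
      calc τ * τ ^ p * Real.exp (τ ^ β) = τ ^ (p + 1) * Real.exp (τ ^ β) := by rw [h1]
        _ ≤ τ ^ (p + 1) * Real.exp (s ^ β) :=
            mul_le_mul_of_nonneg_left hexp (Real.rpow_nonneg hτ0 _)
        _ = Real.exp (s ^ β) * τ ^ (p + 1) := mul_comm _ _
  have hval : (∫ τ in (0:ℝ)..s, Real.exp (s ^ β) * τ ^ (p + 1)) =
      1 / (p + 2) * s ^ (p + 2) * Real.exp (s ^ β) := by
    rw [intervalIntegral.integral_const_mul,
      integral_rpow (Or.inl (by linarith : (-1:ℝ) < p + 1))]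
    rw [Real.zero_rpow (by linarith : p + 1 + 1 ≠ 0)]
    have : p + 1 + 1 = p + 2 := by ring
    rw [this]
    ring
  linarith [hle, hval.le, hval.ge]

theorem stmt10 (p β : ℝ) (hp : 0 < p) (hβ : 0 < β)
    (g G : ℝ → ℝ)
    (hg : ∀ s, g s = s * |s| ^ p * Real.exp (|s| ^ β))
    (hG : ∀ s, G s = ∫ τ in (0:ℝ)..s, g τ) :
    ∀ s : ℝ, G s ≤ 1 / (p + 2) * g s * s := by
  intro s
  have hgfun : g = fun τ : ℝ => τ * |τ| ^ p * Real.exp (|τ| ^ β) := funext hg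
  have hrhs : ∀ t : ℝ, 1 / (p + 2) * g t * t
      = 1 / (p + 2) * |t| ^ (p + 2) * Real.exp (|t| ^ β) := by
    intro t
    rw [hg]
    rcases eq_or_ne t 0 with h | h
    · simp [h, Real.zero_rpow (by linarith : p + 2 ≠ 0), Real.zero_rpow hp.ne']
    · have habs : (0:ℝ) < |t| := abs_pos.2 h
      have : |t| ^ (p + 2) = |t| ^ p * t * t := by
        rw [show p + 2 = p + 1 + 1 by ring, Real.rpow_add_one habs.ne',
          Real.rpow_add_one habs.ne']
        rcases abs_choice t with h' | h' <;> rw [h'] <;> ring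
      rw [this]; ring
  rcases le_or_gt 0 s with hs | hs
  · have := key p β hp hβ s hs
    rw [hG, hrhs, abs_of_nonneg hs]
    simp only [hg]
    exact this
  · -- s < 0 : G s = G (-s) by oddness of g
    have heven : (∫ τ in (0:ℝ)..s, g τ) = ∫ τ in (0:ℝ)..(-s), g τ := by
      have hodd : ∀ x : ℝ, g (-x) = - g x := by
        intro x; rw [hg, hg]; simp only [abs_neg]; ring
      have := intervalIntegral.integral_comp_neg (a := (0:ℝ)) (b := -s) (f := g)
      simp only [neg_neg, neg_zero] at this
      calc (∫ τ in (0:ℝ)..s, g τ) = -∫ τ in s..(0:ℝ), g τ := by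
              rw [intervalIntegral.integral_symm]
        _ = -∫ x in (0:ℝ)..(-s), g (-x) := by rw [this]
        _ = ∫ x in (0:ℝ)..(-s), g x := by
              simp only [hodd, intervalIntegral.integral_neg, neg_neg]
    have := key p β hp hβ (-s) (by linarith)
    rw [hG, heven, hrhs, abs_of_nonpos hs.le]
    simp only [hg]
    exact this
end

section
/- Let n ≥ 2, 0 < q < n−1 < 2n−1 < p+1, β > 0 and g(s) = s|s|^p e^{|s|^β}, G its primitive. Define ρ(s) = ((2n+q)/(2n(q+1))) g(s)s − G(s) − (1/(2n(q+1))) g'(s)s². Then ρ(s) ≤ 0 for all s ≥ 0. -/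
/-!
Put `c = 2n(q+1)` and `A = 2n+q-p-1`. Then `c (ρ + G)` is the function
`φ(s) = (A - β s^β) s^(p+2) e^(s^β)`, which vanishes at `0`, and
`φ'(s) = (A(p+2) + (A-p-2-β) β t - β² t²) g(s)` with `t = s^β ≥ 0`.
The constraints on `n, p, q` give `c - A(p+2) = (p+2-2n)(p+1-q) ≥ 0` and `A ≤ p+2+β`,
so `φ' ≤ c g` and integrating from `0` yields `φ(s) ≤ c G(s)`, i.e. `ρ(s) ≤ 0`.
-/

open Real Set

noncomputable section

def expPowProfile (p β A x : ℝ) : ℝ :=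
  (A - β * x ^ β) * x ^ (p + 2) * exp (x ^ β)

namespace expPowProfile

variable {p β A : ℝ}

theorem zero (hp : p + 2 ≠ 0) : expPowProfile p β A 0 = 0 := by
  simp [expPowProfile, zero_rpow hp]

theorem continuous (hp : 0 ≤ p + 2) (hβ : 0 ≤ β) : Continuous (expPowProfile p β A) := by
  unfold expPowProfile
  fun_prop (disch := assumption)

theorem hasDerivAt {x : ℝ} (hx : 0 < x) :
    HasDerivAt (expPowProfile p β A)
      ((A * (p + 2) + (A - p - 2 - β) * (β * x ^ β) - β ^ 2 * (x ^ β) ^ 2)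
        * (x ^ (p + 1) * exp (x ^ β))) x := by
  have hpow : ∀ r, HasDerivAt (fun y : ℝ => y ^ r) (r * x ^ (r - 1)) x :=
    fun r => hasDerivAt_rpow_const (Or.inl hx.ne')
  have hd : HasDerivAt (fun y => (A - β * y ^ β) * y ^ (p + 2) * exp (y ^ β)) _ x :=
    (((hasDerivAt_const x A).sub ((hpow β).const_mul β)).mul (hpow (p + 2))).mul (hpow β).exp
  refine hd.congr_deriv ?_
  simp only [Pi.mul_apply, Pi.sub_apply]
  rw [show p + 2 - 1 = p + 1 by ring, rpow_sub_one hx.ne', show p + 2 = p + 1 + 1 by ring,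
    rpow_add_one hx.ne']
  field_simp
  ring

theorem le_mul_integral {c s : ℝ} (hs : 0 ≤ s) (hp : 0 ≤ p + 1) (hβ : 0 ≤ β)
    (hAc : A * (p + 2) ≤ c) (hA : A ≤ p + 2 + β) :
    expPowProfile p β A s ≤ c * ∫ x in (0 : ℝ)..s, x ^ (p + 1) * exp (x ^ β) := by
  have hint : Continuous fun x : ℝ => c * (x ^ (p + 1) * exp (x ^ β)) := by
    fun_prop (disch := assumption)
  have h : expPowProfile p β A s - expPowProfile p β A 0
      ≤ ∫ x in (0 : ℝ)..s, c * (x ^ (p + 1) * exp (x ^ β)) :=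
    intervalIntegral.sub_le_integral_of_hasDeriv_right_of_le hs
      (continuous (by linarith) hβ).continuousOn (fun x hx => (hasDerivAt hx.1).hasDerivWithinAt)
      hint.integrableOn_Icc (fun x hx => ?_)
  · rwa [zero (by linarith), sub_zero, intervalIntegral.integral_const_mul] at h
  have ht : 0 ≤ β * x ^ β := mul_nonneg hβ (rpow_nonneg hx.1.le β)
  have hquad : A * (p + 2) + (A - p - 2 - β) * (β * x ^ β) - β ^ 2 * (x ^ β) ^ 2 ≤ c := by
    nlinarith [mul_nonpos_of_nonpos_of_nonneg (by linarith : A - p - 2 - β ≤ 0) ht]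
  exact mul_le_mul_of_nonneg_right hquad
    (mul_nonneg (rpow_nonneg hx.1.le _) (exp_pos _).le)

end expPowProfile

theorem mul_rho_eq_expPowProfile_sub {p β a c s : ℝ} (hs : 0 ≤ s) (hp : p + 2 ≠ 0)
    (hc : c ≠ 0) (G : ℝ) :
    c * (a / c * (s ^ (p + 1) * exp (s ^ β)) * s - G
        - 1 / c * ((p + 1 + β * s ^ β) * s ^ p * exp (s ^ β)) * s ^ 2)
      = expPowProfile p β (a - p - 1) s - c * G := by
  have h1 : s ^ (p + 2) = s ^ (p + 1) * s := by
    rw [show p + 2 = p + 1 + 1 by ring, rpow_add' hs (by rwa [add_assoc, one_add_one_eq_two]),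
      rpow_one]
  have h2 : s ^ p * s ^ 2 = s ^ (p + 1) * s := by
    rw [← h1, rpow_add' hs hp, rpow_two]
  unfold expPowProfile
  rw [h1]
  field_simp
  linear_combination (-(p + 1 + β * s ^ β) * exp (s ^ β)) * h2

theorem stmt17_general (n : ℕ) (p q β : ℝ)
    (hq : 0 < q) (hq' : q < (n:ℝ) - 1) (hp : 2 * (n:ℝ) - 1 < p + 1) (hβ : 0 < β)
    (g g' G ρ : ℝ → ℝ)
    (hg : ∀ s ≥ (0:ℝ), g s = s ^ (p + 1) * Real.exp (s ^ β))
    (hg' : ∀ s ≥ (0:ℝ), g' s = (p + 1 + β * s ^ β) * s ^ p * Real.exp (s ^ β))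
    (hG : ∀ s, G s = ∫ τ in (0:ℝ)..s, g τ)
    (hρ : ∀ s ≥ (0:ℝ), ρ s = (2 * (n:ℝ) + q) / (2 * n * (q + 1)) * g s * s - G s
        - 1 / (2 * n * (q + 1)) * g' s * s ^ 2) :
    ∀ s ≥ (0:ℝ), ρ s ≤ 0 := by
  intro s hs
  have hc : 0 < 2 * (n : ℝ) * (q + 1) := by
    have : (1 : ℝ) < n := by linarith
    positivity
  have hGs : G s = ∫ x in (0 : ℝ)..s, x ^ (p + 1) * exp (x ^ β) :=
    (hG s).trans <| intervalIntegral.integral_congr fun x hx => hg x (by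
      rw [uIcc_of_le hs] at hx; exact hx.1)
  have hAc : (2 * n + q - p - 1) * (p + 2) ≤ 2 * n * (q + 1) := by
    nlinarith [mul_nonneg (by linarith : 0 ≤ p + 2 - 2 * n) (by linarith : 0 ≤ p + 1 - q)]
  have hφ : expPowProfile p β (2 * n + q - p - 1) s ≤ 2 * n * (q + 1) * G s :=
    hGs ▸ expPowProfile.le_mul_integral hs (by linarith) hβ.le hAc (by linarith)
  have hρs : 2 * n * (q + 1) * ρ s
      = expPowProfile p β (2 * n + q - p - 1) s - 2 * n * (q + 1) * G s := by
    rw [hρ s hs, hg s hs, hg' s hs, ← mul_rho_eq_expPowProfile_sub hs (by linarith) hc.ne']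
  exact nonpos_of_mul_nonpos_right (by linarith) hc

theorem stmt17 (n : ℕ) (p q β : ℝ) (hn : 2 ≤ n)
    (hq : 0 < q) (hq' : q < (n:ℝ) - 1) (hp : 2 * (n:ℝ) - 1 < p + 1) (hβ : 0 < β)
    (g g' G ρ : ℝ → ℝ)
    (hg : ∀ s ≥ (0:ℝ), g s = s ^ (p + 1) * Real.exp (s ^ β))
    (hg' : ∀ s ≥ (0:ℝ), g' s = (p + 1 + β * s ^ β) * s ^ p * Real.exp (s ^ β))
    (hG : ∀ s, G s = ∫ τ in (0:ℝ)..s, g τ)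
    (hρ : ∀ s ≥ (0:ℝ), ρ s = (2 * (n:ℝ) + q) / (2 * n * (q + 1)) * g s * s - G s
        - 1 / (2 * n * (q + 1)) * g' s * s ^ 2) :
    ∀ s ≥ (0:ℝ), ρ s ≤ 0 :=
  stmt17_general n p q β hq hq' hp hβ g g' G ρ hg hg' hG hρ
end
end
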